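/- Let two cannons alternate attacks along a line: at time t the active cannon sits at position k_t + d (for fixed offset d > 0 in the orthogonal direction) capturing a screen piece at the king's column, forcing the king from column k_t to column k_t + 1. If there are screen pieces at every column k₀+1, ..., k₀+m at the start, then the alternating-cannon process can force the king m columns forward, and the two cannons occupy columns k₀+m−1 and k₀+m at the end. -/

import Mathlib

/-- State of the alternating-cannon ('start gadget') process: the king's
column, the columns of the leading and trailing cannons, and the set of
columns still containing screen pieces. -/
structure CannonState where
  king : ℕ
  lead : ℕ
  trail : ℕ
  screens : Finset ℕ

/-- One step of the process: the trailing cannon leapfrogs to the column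
`king + 1`, capturing the screen there and checking the king, which is forced
one column forward; the old leading cannon becomes the new trailing cannon. -/
def cannonStep (s : CannonState) : CannonState :=
  { king := s.king + 1
    lead := s.king + 1
    trail := s.lead
    screens := s.screens.erase (s.king + 1) }

/-
After `t` steps the king has advanced `t` columns, the leading cannon stands on the king's column
and the trailing one just behind it, and exactly the screens on the `t` columns in front of the
starting column have been captured. So step `t` finds a screen in front of the king iff the column
`k₀ + t + 1` initially held one.
-/

section

variable {s : CannonState}

theorem iterate_cannonStep_king (s : CannonState) (t : ℕ) :
    (cannonStep^[t] s).king = s.king + t := by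
  induction t with
  | zero => rfl
  | succ t ih => rw [Function.iterate_succ_apply', cannonStep, ih, add_assoc]

theorem iterate_cannonStep_lead (hs : s.lead = s.king) (t : ℕ) :
    (cannonStep^[t] s).lead = s.king + t := by
  cases t with
  | zero => exact hs
  | succ t => rw [Function.iterate_succ_apply', cannonStep, iterate_cannonStep_king, add_assoc]

theorem iterate_cannonStep_trail (hs : s.lead = s.king) {t : ℕ} (ht : 1 ≤ t) :
    (cannonStep^[t] s).trail = s.king + t - 1 := by
  obtain ⟨t, rfl⟩ := Nat.exists_eq_add_of_le' ht
  rw [Function.iterate_succ_apply', cannonStep, iterate_cannonStep_lead hs, ← add_assoc,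
    Nat.add_sub_cancel]

theorem iterate_cannonStep_screens (s : CannonState) (t : ℕ) :
    (cannonStep^[t] s).screens = s.screens \ Finset.Ioc s.king (s.king + t) := by
  induction t with
  | zero => simp
  | succ t ih =>
    rw [Function.iterate_succ_apply', cannonStep, ih, iterate_cannonStep_king, ← add_assoc,
      ← Finset.insert_Ioc_right_eq_Ioc_add_one (Nat.le_add_right _ _), Finset.sdiff_insert]

theorem king_add_one_mem_iterate_cannonStep_screens_iff (s : CannonState) (t : ℕ) :
    (cannonStep^[t] s).king + 1 ∈ (cannonStep^[t] s).screens ↔ s.king + t + 1 ∈ s.screens := by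
  rw [iterate_cannonStep_screens, iterate_cannonStep_king, Finset.mem_sdiff, Finset.mem_Ioc]
  exact and_iff_left (by omega)

end

theorem alternating_cannons_general (k₀ m : ℕ) (hm : 1 ≤ m) (s₀ : CannonState)
    (hking : s₀.king = k₀) (hlead : s₀.lead = k₀)
    (hscreens : s₀.screens = (Finset.Icc 1 m).image (k₀ + ·)) :
    (∀ t < m, (cannonStep^[t] s₀).king + 1 ∈ (cannonStep^[t] s₀).screens) ∧
    (cannonStep^[m] s₀).king = k₀ + m ∧
    (cannonStep^[m] s₀).lead = k₀ + m ∧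
    (cannonStep^[m] s₀).trail = k₀ + m - 1 := by
  subst hking
  refine ⟨fun t ht => ?_, iterate_cannonStep_king s₀ m,
    iterate_cannonStep_lead hlead m, iterate_cannonStep_trail hlead hm⟩
  rw [king_add_one_mem_iterate_cannonStep_screens_iff, hscreens, add_assoc]
  exact Finset.mem_image_of_mem _ (Finset.mem_Icc.2 ⟨Nat.le_add_left 1 t, ht⟩)

/-- If screens sit at every column `k₀+1, ..., k₀+m` at the start (king at
`k₀`, cannons at `k₀` and `k₀-1`), then the alternating-cannon process forces
the king `m` columns forward: each of the `m` steps captures a screen that is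
indeed present, and at the end the king is at `k₀+m` with the two cannons at
columns `k₀+m` and `k₀+m−1`. -/
theorem alternating_cannons (k₀ m : ℕ) (hm : 1 ≤ m) (s₀ : CannonState)
    (hking : s₀.king = k₀) (hlead : s₀.lead = k₀) (htrail : s₀.trail = k₀ - 1)
    (hscreens : s₀.screens = (Finset.Icc 1 m).image (k₀ + ·)) :
    (∀ t < m, (cannonStep^[t] s₀).king + 1 ∈ (cannonStep^[t] s₀).screens) ∧
    (cannonStep^[m] s₀).king = k₀ + m ∧
    (cannonStep^[m] s₀).lead = k₀ + m ∧
    (cannonStep^[m] s₀).trail = k₀ + m - 1 :=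
  alternating_cannons_general k₀ m hm s₀ hking hlead hscreens
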